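/- arXiv:2302.01909 — 2 statements merged into one kernel-verified Lean document; each statement's English description precedes it below -/
import Mathlib

section
/- If h ≤ n!, then every subgroup of S_h × {id} is an anonymity group: for every subgroup V ≤ S_h there exists a social preference function F : P → S_n with G_1(F) = V × {id}. -/
open Equiv

/-- The action of `S_h × S_n` on preference profiles `p : Fin h → Perm (Fin n)`:
`(p^{(φ,ψ)})_i = ψ ∘ p_{φ⁻¹ i}`. -/
def act {h n : ℕ} (g : Perm (Fin h) × Perm (Fin n)) (p : Fin h → Perm (Fin n)) :
    Fin h → Perm (Fin n) :=
  fun i => g.2 * p (g.1⁻¹ i)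

/-- The symmetry group `G(F)` of a social preference function `F`. -/
def symGroup {h n : ℕ} (F : (Fin h → Perm (Fin n)) → Perm (Fin n)) :
    Subgroup (Perm (Fin h) × Perm (Fin n)) where
  carrier := {g | ∀ p, F (act g p) = g.2 * F p}
  one_mem' := by
    intro p
    have h1 : act (1 : Perm (Fin h) × Perm (Fin n)) p = p := by
      funext i; simp [act]
    rw [h1]; simp
  mul_mem' := by
    intro a b ha hb p
    have hab : act (a * b) p = act a (act b p) := by
      funext i
      simp [act, mul_assoc]
    rw [hab, ha, hb, Prod.snd_mul, mul_assoc]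
  inv_mem' := by
    intro a ha p
    have key := ha (act a⁻¹ p)
    have h1 : act a (act a⁻¹ p) = p := by
      funext i
      simp [act, mul_assoc]
    rw [h1] at key
    rw [key]
    simp [mul_assoc]

/-- The anonymity group `G₁(F) = G(F) ∩ (S_h × {id})`. -/
def anonGroup {h n : ℕ} (F : (Fin h → Perm (Fin n)) → Perm (Fin n)) :
    Subgroup (Perm (Fin h) × Perm (Fin n)) :=
  symGroup F ⊓ Subgroup.prod ⊤ ⊥

/-!
Since `h ≤ n!`, there is a profile `p₀` in which all individuals report distinct orders.
Anonymous permutations act freely on such a profile, so `φ` maps the `V`-orbit of `p₀` into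
itself exactly when `φ ∈ V`. The social preference function that returns the identity on this
orbit and a fixed non-identity order (available as `n ≥ 2`) elsewhere therefore has anonymity
group `V × {id}`.
-/

open Function

section Profiles

variable {h n : ℕ}

lemma act_mul (a b : Perm (Fin h) × Perm (Fin n)) (p : Fin h → Perm (Fin n)) :
    act (a * b) p = act a (act b p) := by
  funext i
  simp [act, mul_assoc]

lemma act_one (p : Fin h → Perm (Fin n)) : act 1 p = p := by
  funext i
  simp [act]

lemma act_inv_act (a : Perm (Fin h) × Perm (Fin n)) (p : Fin h → Perm (Fin n)) :
    act a⁻¹ (act a p) = p := by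
  rw [← act_mul, inv_mul_cancel, act_one]

lemma act_one_left_injective {p₀ : Fin h → Perm (Fin n)} (hp₀ : Injective p₀) :
    Injective fun φ : Perm (Fin h) => act (φ, 1) p₀ := by
  intro φ v hφv
  rw [← inv_inj]
  exact Equiv.ext fun i => by simpa [act] using hp₀ (congrFun hφv i)

def anonOrbit (V : Subgroup (Perm (Fin h))) (p₀ : Fin h → Perm (Fin n)) :
    Set (Fin h → Perm (Fin n)) :=
  {p | ∃ v ∈ V, act (v, 1) p₀ = p}

lemma act_mem_anonOrbit_iff {V : Subgroup (Perm (Fin h))} {φ : Perm (Fin h)} (hφ : φ ∈ V)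
    (p₀ p : Fin h → Perm (Fin n)) :
    act (φ, 1) p ∈ anonOrbit V p₀ ↔ p ∈ anonOrbit V p₀ := by
  constructor
  · rintro ⟨v, hv, hvp⟩
    refine ⟨φ⁻¹ * v, V.mul_mem (V.inv_mem hφ) hv, ?_⟩
    rw [← act_inv_act (φ, 1) p, ← hvp, ← act_mul]
    rfl
  · rintro ⟨v, hv, rfl⟩
    exact ⟨φ * v, V.mul_mem hφ hv, act_mul (φ, 1) (v, 1) p₀⟩

lemma act_one_mem_anonOrbit_self_iff {V : Subgroup (Perm (Fin h))} {p₀ : Fin h → Perm (Fin n)}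
    (hp₀ : Injective p₀) (φ : Perm (Fin h)) :
    act (φ, 1) p₀ ∈ anonOrbit V p₀ ↔ φ ∈ V := by
  constructor
  · rintro ⟨v, hv, hvφ⟩
    rwa [← act_one_left_injective hp₀ hvφ]
  · intro hφ
    exact ⟨φ, hφ, rfl⟩

lemma preserves_anonOrbit_iff {V : Subgroup (Perm (Fin h))} {p₀ : Fin h → Perm (Fin n)}
    (hp₀ : Injective p₀) (φ : Perm (Fin h)) :
    (∀ p, act (φ, 1) p ∈ anonOrbit V p₀ ↔ p ∈ anonOrbit V p₀) ↔ φ ∈ V := by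
  refine ⟨fun hφ => ?_, fun hφ => act_mem_anonOrbit_iff hφ p₀⟩
  rw [← act_one_mem_anonOrbit_self_iff hp₀, hφ]
  exact ⟨1, V.one_mem, act_one p₀⟩

noncomputable def indicatorSPF (S : Set (Fin h → Perm (Fin n))) (c : Perm (Fin n)) :
    (Fin h → Perm (Fin n)) → Perm (Fin n) :=
  open Classical in fun p => if p ∈ S then 1 else c

lemma indicatorSPF_eq_iff {S : Set (Fin h → Perm (Fin n))} {c : Perm (Fin n)} (hc : c ≠ 1)
    (p q : Fin h → Perm (Fin n)) :
    indicatorSPF S c p = indicatorSPF S c q ↔ (p ∈ S ↔ q ∈ S) := by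
  unfold indicatorSPF
  by_cases hp : p ∈ S <;> by_cases hq : q ∈ S <;> simp [hp, hq, hc, hc.symm]

lemma mem_anonGroup_iff (F : (Fin h → Perm (Fin n)) → Perm (Fin n))
    (φ : Perm (Fin h)) (ψ : Perm (Fin n)) :
    (φ, ψ) ∈ anonGroup F ↔ (∀ p, F (act (φ, 1) p) = F p) ∧ ψ = 1 := by
  simp only [anonGroup, Subgroup.mem_inf, Subgroup.mem_prod, Subgroup.mem_top,
    Subgroup.mem_bot, true_and]
  constructor
  · rintro ⟨hF, rfl⟩
    exact ⟨fun p => (hF p).trans (one_mul _), rfl⟩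
  · rintro ⟨hF, rfl⟩
    exact ⟨fun p => (hF p).trans (one_mul _).symm, rfl⟩

end Profiles

theorem every_anonymity_group_of_le_factorial_general (h n : ℕ) (hn : 2 ≤ n)
    (hfac : h ≤ Nat.factorial n) (V : Subgroup (Perm (Fin h))) :
    ∃ F : (Fin h → Perm (Fin n)) → Perm (Fin n),
      anonGroup F = V.prod (⊥ : Subgroup (Perm (Fin n))) := by
  obtain ⟨p₀⟩ : Nonempty (Fin h ↪ Perm (Fin n)) :=
    Embedding.nonempty_of_card_le (by simpa [Fintype.card_perm] using hfac)
  have : Nontrivial (Fin n) := Fin.nontrivial_iff_two_le.2 hn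
  obtain ⟨c, hc⟩ := exists_ne (1 : Perm (Fin n))
  refine ⟨indicatorSPF (anonOrbit V p₀) c, ?_⟩
  ext ⟨φ, ψ⟩
  simp only [mem_anonGroup_iff, indicatorSPF_eq_iff hc, preserves_anonOrbit_iff p₀.injective,
    Subgroup.mem_prod, Subgroup.mem_bot]

/-- If `h ≤ n!`, then every subgroup of `S_h × {id}` is an anonymity group. -/
theorem every_anonymity_group_of_le_factorial (h n : ℕ) (hh : 2 ≤ h) (hn : 2 ≤ n)
    (hfac : h ≤ Nat.factorial n) (V : Subgroup (Perm (Fin h))) :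
    ∃ F : (Fin h → Perm (Fin n)) → Perm (Fin n),
      anonGroup F = V.prod (⊥ : Subgroup (Perm (Fin n))) :=
  every_anonymity_group_of_le_factorial_general h n hn hfac V
end

section
/- Let h ≥ 2 and n ≥ 2 and let A_h ≤ S_h denote the alternating group. Then A_h × {id} is an anonymity group for the pair (h,n) (i.e. there exists a social preference function F with G_1(F) = A_h × {id}) if and only if h ≤ n!. -/
open Equiv

/-! If `h > n!`, every profile has two voters with the same preference, so relabeling it by an
odd permutation has the same effect as relabeling it by an even one (compose with their
transposition): an SPF invariant under `A_h` is then invariant under all of `S_h`. Conversely, if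
`h ≤ n!`, take a profile `p₀` with pairwise distinct entries. Its `A_h`-orbit contains no odd
relabeling of `p₀`, so the SPF with value `c ≠ 1` on that orbit and `1` elsewhere has anonymity
group exactly `A_h × {id}`. -/

open Function

lemma Set.mulIndicator_const_eq_mulIndicator_const_iff {α M : Type*} [One M] {s : Set α}
    {c : M} (hc : c ≠ 1) {a b : α} :
    s.mulIndicator (fun _ => c) a = s.mulIndicator (fun _ => c) b ↔ (a ∈ s ↔ b ∈ s) := by
  by_cases ha : a ∈ s <;> by_cases hb : b ∈ s <;> simp [ha, hb, hc, hc.symm]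

section Relabeling

variable {α β : Type*} [DecidableEq α]

lemma comp_swap_eq_self {p : α → β} {i j : α} (hp : p i = p j) : p ∘ swap i j = p := by
  simp [comp_swap_eq_update, hp]

variable [Fintype α]

lemma exists_mem_alternatingGroup_comp_inv_eq {p : α → β} {i j : α} (hij : i ≠ j)
    (hp : p i = p j) (φ : Perm α) : ∃ ψ ∈ alternatingGroup α, p ∘ ⇑ψ⁻¹ = p ∘ ⇑φ⁻¹ := by
  rcases Int.units_eq_one_or (Perm.sign φ) with hφ | hφ
  · exact ⟨φ, hφ, rfl⟩
  · refine ⟨φ * swap i j, by simp [hφ, Perm.sign_swap hij], ?_⟩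
    rw [mul_inv_rev, swap_inv, Perm.coe_mul, ← comp_assoc, comp_swap_eq_self hp]

def alternatingOrbit (p₀ : α → β) : Set (α → β) :=
  {p | ∃ ψ ∈ alternatingGroup α, p₀ ∘ ⇑ψ⁻¹ = p}

lemma self_mem_alternatingOrbit (p₀ : α → β) : p₀ ∈ alternatingOrbit p₀ :=
  ⟨1, one_mem _, rfl⟩

lemma comp_inv_mem_alternatingOrbit {p₀ p : α → β} {φ : Perm α} (hφ : φ ∈ alternatingGroup α)
    (hp : p ∈ alternatingOrbit p₀) : p ∘ ⇑φ⁻¹ ∈ alternatingOrbit p₀ := by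
  obtain ⟨ψ, hψ, rfl⟩ := hp
  exact ⟨φ * ψ, mul_mem hφ hψ, by rw [mul_inv_rev, Perm.coe_mul, comp_assoc]⟩

lemma comp_inv_mem_alternatingOrbit_iff {p₀ p : α → β} {φ : Perm α}
    (hφ : φ ∈ alternatingGroup α) : p ∘ ⇑φ⁻¹ ∈ alternatingOrbit p₀ ↔ p ∈ alternatingOrbit p₀ := by
  refine ⟨fun hp => ?_, comp_inv_mem_alternatingOrbit hφ⟩
  simpa [comp_assoc] using comp_inv_mem_alternatingOrbit (inv_mem hφ) hp

lemma mem_alternatingGroup_of_comp_inv_mem_alternatingOrbit {p₀ : α → β} (hp₀ : Injective p₀)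
    {φ : Perm α} (hφ : p₀ ∘ ⇑φ⁻¹ ∈ alternatingOrbit p₀) : φ ∈ alternatingGroup α := by
  obtain ⟨ψ, hψ, hψφ⟩ := hφ
  rwa [← inv_injective (DFunLike.coe_injective (hp₀.comp_left hψφ))]

end Relabeling

section Anonymity

variable {h n : ℕ}

lemma act_fst_one (φ : Perm (Fin h)) (p : Fin h → Perm (Fin n)) :
    act (φ, 1) p = p ∘ ⇑φ⁻¹ :=
  funext fun _ => one_mul _

lemma mem_anonGroup {F : (Fin h → Perm (Fin n)) → Perm (Fin n)}
    {g : Perm (Fin h) × Perm (Fin n)} :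
    g ∈ anonGroup F ↔ g.2 = 1 ∧ ∀ p, F (p ∘ ⇑g.1⁻¹) = F p := by
  obtain ⟨φ, ψ⟩ := g
  simp only [anonGroup, Subgroup.mem_inf, Subgroup.mem_prod, Subgroup.mem_top,
    Subgroup.mem_bot, true_and]
  constructor
  · rintro ⟨hF, rfl⟩
    exact ⟨rfl, fun p => by simpa [act_fst_one] using hF p⟩
  · rintro ⟨rfl, hF⟩
    exact ⟨fun p => by simpa [act_fst_one] using hF p, rfl⟩

lemma mem_alternatingGroup_prod_bot {φ : Perm (Fin h)} {ψ : Perm (Fin n)} :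
    (φ, ψ) ∈ (alternatingGroup (Fin h)).prod ⊥ ↔ Perm.sign φ = 1 ∧ ψ = 1 := by
  rw [Subgroup.mem_prod, Perm.mem_alternatingGroup, Subgroup.mem_bot]

lemma mem_anonGroup_of_factorial_lt {F : (Fin h → Perm (Fin n)) → Perm (Fin n)}
    (hF : (alternatingGroup (Fin h)).prod ⊥ ≤ anonGroup F) (hlt : n.factorial < h)
    (φ : Perm (Fin h)) : (φ, 1) ∈ anonGroup F := by
  refine mem_anonGroup.2 ⟨rfl, fun p => ?_⟩
  have hcard : Fintype.card (Perm (Fin n)) < Fintype.card (Fin h) := by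
    simpa [Fintype.card_perm] using hlt
  obtain ⟨i, j, hij, hp⟩ := Fintype.exists_ne_map_eq_of_card_lt p hcard
  obtain ⟨ψ, hψ, hψφ⟩ := exists_mem_alternatingGroup_comp_inv_eq hij hp φ
  rw [← hψφ]
  exact (mem_anonGroup.1 (hF (mem_alternatingGroup_prod_bot.2 ⟨hψ, rfl⟩))).2 p

theorem anonGroup_mulIndicator_alternatingOrbit {p₀ : Fin h → Perm (Fin n)} (hp₀ : Injective p₀)
    {c : Perm (Fin n)} (hc : c ≠ 1) :
    anonGroup ((alternatingOrbit p₀).mulIndicator fun _ => c) =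
      (alternatingGroup (Fin h)).prod ⊥ := by
  ext ⟨φ, ψ⟩
  simp only [mem_anonGroup, Set.mulIndicator_const_eq_mulIndicator_const_iff hc,
    mem_alternatingGroup_prod_bot, and_comm]
  refine and_congr_right fun _ => ⟨fun hφ => ?_, fun hφ p => comp_inv_mem_alternatingOrbit_iff hφ⟩
  exact mem_alternatingGroup_of_comp_inv_mem_alternatingOrbit hp₀
    ((hφ p₀).2 (self_mem_alternatingOrbit p₀))

end Anonymity

theorem alternating_anonymity_iff_general (h n : ℕ) (hn : 2 ≤ n) :
    (∃ F : (Fin h → Perm (Fin n)) → Perm (Fin n),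
        anonGroup F =
          (alternatingGroup (Fin h)).prod (⊥ : Subgroup (Perm (Fin n)))) ↔
      h ≤ Nat.factorial n := by
  constructor
  · rintro ⟨F, hF⟩
    by_contra! hlt
    have : Nontrivial (Fin h) :=
      Fin.nontrivial_iff_two_le.2 ((Nat.succ_le_of_lt (Nat.factorial_pos n)).trans_lt hlt)
    obtain ⟨φ, hφ⟩ := Perm.sign_surjective (Fin h) (-1)
    have hφ_even := mem_alternatingGroup_prod_bot.1 (hF ▸ mem_anonGroup_of_factorial_lt hF.ge hlt φ)
    exact absurd (hφ.symm.trans hφ_even.1) (by decide)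
  · intro hle
    obtain ⟨p₀⟩ : Nonempty (Fin h ↪ Perm (Fin n)) :=
      Embedding.nonempty_of_card_le (by simpa [Fintype.card_perm] using hle)
    have : Nontrivial (Fin n) := Fin.nontrivial_iff_two_le.2 hn
    obtain ⟨c, hc⟩ := exists_ne (1 : Perm (Fin n))
    exact ⟨_, anonGroup_mulIndicator_alternatingOrbit p₀.injective hc⟩

/-- `A_h × {id}` is an anonymity group for the voting pair `(h,n)` iff `h ≤ n!`. -/
theorem alternating_anonymity_iff (h n : ℕ) (hh : 2 ≤ h) (hn : 2 ≤ n) :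
    (∃ F : (Fin h → Perm (Fin n)) → Perm (Fin n),
        anonGroup F =
          (alternatingGroup (Fin h)).prod (⊥ : Subgroup (Perm (Fin n)))) ↔
      h ≤ Nat.factorial n :=
  alternating_anonymity_iff_general h n hn
end
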